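/- arXiv:1306.1684 — 8 statements merged into one kernel-verified Lean document; each statement's English description precedes it below -/
import Mathlib

section
/- Let g be a simple Lie algebra with sl2-triple {f,2x,e} where f is a short nilpotent, i.e. the ad(x)-eigenspace decomposition is g = g_{-1} ⊕ g₀ ⊕ g₁. Let g₀^f = g₀ ∩ ker(ad f). Then the decomposition g₀ = g₀^f ⊕ [f,g₁] is a Z/2Z-grading of the Lie algebra g₀: (a) [g₀^f, g₀^f] ⊆ g₀^f; (b) [g₀^f, [f,g₁]] ⊆ [f,g₁]; (c) [[f,g₁],[f,g₁]] ⊆ g₀^f. -/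
/-- For a short nilpotent f (ad x has eigenvalues -1,0,1), the decomposition
g₀ = g₀^f ⊕ [f,g₁] is a ℤ/2ℤ-grading of g₀:
(a) [g₀^f, g₀^f] ⊆ g₀^f; (b) [g₀^f, [f,g₁]] ⊆ [f,g₁]; (c) [[f,g₁],[f,g₁]] ⊆ g₀^f. -/
theorem stmt5 {F : Type*} [Field F] [CharZero F]
    {g : Type*} [LieRing g] [LieAlgebra F g] [FiniteDimensional F g]
    [LieAlgebra.IsSimple F g]
    (e x f : g)
    (hef : ⁅e, f⁆ = (2 : F) • x) (hxe : ⁅x, e⁆ = e) (hxf : ⁅x, f⁆ = -f)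
    (hdec : ∀ y : g, ∃ ym y0 y1 : g, ⁅x, ym⁆ = -ym ∧ ⁅x, y0⁆ = 0 ∧ ⁅x, y1⁆ = y1 ∧
      y = ym + y0 + y1) :
    (∀ a b : g, ⁅x, a⁆ = 0 → ⁅f, a⁆ = 0 → ⁅x, b⁆ = 0 → ⁅f, b⁆ = 0 →
      ⁅x, ⁅a, b⁆⁆ = 0 ∧ ⁅f, ⁅a, b⁆⁆ = 0) ∧
    (∀ a v : g, ⁅x, a⁆ = 0 → ⁅f, a⁆ = 0 → ⁅x, v⁆ = v →
      ∃ w : g, ⁅x, w⁆ = w ∧ ⁅a, ⁅f, v⁆⁆ = ⁅f, w⁆) ∧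
    (∀ v v₁ : g, ⁅x, v⁆ = v → ⁅x, v₁⁆ = v₁ →
      ⁅x, ⁅⁅f, v⁆, ⁅f, v₁⁆⁆⁆ = 0 ∧ ⁅f, ⁅⁅f, v⁆, ⁅f, v₁⁆⁆⁆ = 0) := by
  -- Elements whose ad x eigenvalue is outside {-1,0,1} vanish.
  have key : ∀ (c : F) (z : g), c + 1 ≠ 0 → c ≠ 0 → c - 1 ≠ 0 → ⁅x, z⁆ = c • z → z = 0 := by
    intro c z hc1 hc0 hc2 hz
    obtain ⟨zm, z0, z1, h1, h2, h3, h4⟩ := hdec z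
    have eqA : (c + 1) • zm + c • z0 + (c - 1) • z1 = 0 := by
      have : ⁅x, zm + z0 + z1⁆ = c • (zm + z0 + z1) := by rw [← h4, hz, h4]
      rw [lie_add, lie_add, h1, h2, h3] at this
      linear_combination (norm := module) (-1 : F) • this
    have eqB : -((c + 1) • zm) + (c - 1) • z1 = 0 := by
      have := congrArg (fun t => ⁅x, t⁆) eqA
      simpa [lie_add, lie_smul, h1, h2, h3] using this
    have eqC : (c + 1) • zm + (c - 1) • z1 = 0 := by
      have := congrArg (fun t => ⁅x, t⁆) eqB
      simpa [lie_add, lie_smul, h1, h2, h3] using this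
    have hz1 : z1 = 0 := by
      have h2s : (2 : F) • ((c - 1) • z1) = 0 := by
        linear_combination (norm := module) eqB + eqC
      have := smul_eq_zero.mp h2s
      rcases this with h | h
      · exact absurd h (by norm_num)
      · rcases smul_eq_zero.mp h with h' | h'
        · exact absurd h' hc2
        · exact h'
    have hzm : zm = 0 := by
      rw [hz1, smul_zero, add_zero] at eqC
      rcases smul_eq_zero.mp eqC with h' | h'
      · exact absurd h' hc1
      · exact h'
    have hz0 : z0 = 0 := by
      rw [hz1, hzm, smul_zero, smul_zero, zero_add, add_zero] at eqA
      rcases smul_eq_zero.mp eqA with h' | h'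
      · exact absurd h' hc0
      · exact h'
    simp [h4, hz1, hzm, hz0]
  have key2 : ∀ z : g, ⁅x, z⁆ = (2 : F) • z → z = 0 := fun z hz =>
    key 2 z (by norm_num) (by norm_num) (by norm_num) hz
  have keym2 : ∀ z : g, ⁅x, z⁆ = (-2 : F) • z → z = 0 := fun z hz =>
    key (-2) z (by norm_num) (by norm_num) (by norm_num) hz
  -- f kills g_{-1}
  have hfm : ∀ d : g, ⁅x, d⁆ = -d → ⁅f, d⁆ = 0 := by
    intro d hd
    apply keym2
    rw [leibniz_lie, hxf, hd, neg_lie, lie_neg]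
    module
  -- elements of g_{-1} killed by e are zero
  have hlow : ∀ d : g, ⁅x, d⁆ = -d → ⁅e, d⁆ = 0 → d = 0 := by
    intro d hd hed
    have h1 : ⁅e, ⁅f, d⁆⁆ = (2 : F) • ⁅x, d⁆ + ⁅f, ⁅e, d⁆⁆ := by
      rw [leibniz_lie, hef, smul_lie]
    rw [hfm d hd, hed, lie_zero, lie_zero, add_zero, hd, smul_neg] at h1
    have : (2 : F) • d = 0 := by rw [← neg_eq_zero, ← h1]
    rcases smul_eq_zero.mp this with h | h
    · exact absurd h (by norm_num)
    · exact h
  -- elements of g₀ killed by e are killed by f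
  have hker : ∀ c : g, ⁅x, c⁆ = 0 → ⁅e, c⁆ = 0 → ⁅f, c⁆ = 0 := by
    intro c hxc hec
    apply hlow
    · rw [leibniz_lie, hxf, hxc, lie_zero, add_zero, neg_lie]
    · rw [leibniz_lie, hef, smul_lie, hxc, smul_zero, hec, lie_zero, add_zero]
  -- e kills g₁
  have hev : ∀ v : g, ⁅x, v⁆ = v → ⁅e, v⁆ = 0 := by
    intro v hv
    apply key2
    rw [leibniz_lie, hxe, hv]
    module
  refine ⟨?_, ?_, ?_⟩
  · intro a b hxa hfa hxb hfb
    constructor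
    · rw [leibniz_lie, hxa, hxb, zero_lie, lie_zero, add_zero]
    · rw [leibniz_lie, hfa, hfb, zero_lie, lie_zero, add_zero]
  · intro a v hxa hfa hxv
    refine ⟨⁅a, v⁆, ?_, ?_⟩
    · rw [leibniz_lie, hxa, hxv, zero_lie, zero_add]
    · rw [leibniz_lie]
      have : ⁅a, f⁆ = 0 := by rw [← lie_skew, hfa, neg_zero]
      rw [this, zero_lie, zero_add]
  · intro v v₁ hv hv₁
    have hu : ⁅x, ⁅f, v⁆⁆ = 0 := by
      rw [leibniz_lie, hxf, hv, neg_lie, neg_add_cancel]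
    have hu₁ : ⁅x, ⁅f, v₁⁆⁆ = 0 := by
      rw [leibniz_lie, hxf, hv₁, neg_lie, neg_add_cancel]
    constructor
    · rw [leibniz_lie, hu, hu₁, zero_lie, lie_zero, add_zero]
    · apply hker
      · rw [leibniz_lie, hu, hu₁, zero_lie, lie_zero, add_zero]
      · -- ⁅e, ⁅⁅f,v⁆,⁅f,v₁⁆⁆⁆ = 0
        have heu : ⁅e, ⁅f, v⁆⁆ = (2 : F) • v := by
          rw [leibniz_lie, hef, smul_lie, hv, hev v hv, lie_zero, add_zero]
        have heu₁ : ⁅e, ⁅f, v₁⁆⁆ = (2 : F) • v₁ := by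
          rw [leibniz_lie, hef, smul_lie, hv₁, hev v₁ hv₁, lie_zero, add_zero]
        have hvv : ⁅v, v₁⁆ = 0 := by
          apply key2
          rw [leibniz_lie, hv, hv₁]
          module
        have hsw : ⁅v, ⁅f, v₁⁆⁆ = -⁅⁅f, v⁆, v₁⁆ := by
          rw [leibniz_lie, hvv, lie_zero, add_zero, ← lie_skew v f, neg_lie]
        rw [leibniz_lie, heu, heu₁, smul_lie, lie_smul, hsw]
        module
end

section
/- Let g be a Lie algebra with sl2-triple {f,2x,e} with ad(x)-eigenvalues -1,0,1 (f short nilpotent). For v, v₁ in g₁ one has [e,[[f,v],[f,v₁]]] = 0, i.e. [[f,v],[f,v₁]] lies in the centralizer of e in g₀ (equivalently, in g₀^f). -/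
/-- For a short nilpotent f and v, v₁ in the (+1)-eigenspace g₁ of ad x (so that
g₂ = 0 forces [e,v] = 0), one has [e,[[f,v],[f,v₁]]] = 0, i.e. [[f,v],[f,v₁]]
lies in the centralizer of e in g₀. -/
theorem stmt6 {F : Type*} [Field F] [CharZero F]
    {g : Type*} [LieRing g] [LieAlgebra F g] [FiniteDimensional F g]
    (e x f : g)
    (hef : ⁅e, f⁆ = (2 : F) • x) (hxe : ⁅x, e⁆ = e) (hxf : ⁅x, f⁆ = -f)
    (h2 : ∀ w : g, ⁅x, w⁆ = (2 : F) • w → w = 0)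
    (v v₁ : g) (hv : ⁅x, v⁆ = v) (hv₁ : ⁅x, v₁⁆ = v₁) :
    ⁅e, ⁅⁅f, v⁆, ⁅f, v₁⁆⁆⁆ = 0 := by
  have hev : ⁅e, v⁆ = 0 := h2 _ (by rw [leibniz_lie, hxe, hv, two_smul])
  have hev₁ : ⁅e, v₁⁆ = 0 := h2 _ (by rw [leibniz_lie, hxe, hv₁, two_smul])
  have hvv₁ : ⁅v, v₁⁆ = 0 := h2 _ (by rw [leibniz_lie, hv, hv₁, two_smul])
  have h1 : ⁅e, ⁅f, v⁆⁆ = (2 : F) • v := by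
    rw [leibniz_lie, hev, lie_zero, add_zero, hef, smul_lie, hv]
  have h1' : ⁅e, ⁅f, v₁⁆⁆ = (2 : F) • v₁ := by
    rw [leibniz_lie, hev₁, lie_zero, add_zero, hef, smul_lie, hv₁]
  have key : ⁅v, ⁅f, v₁⁆⁆ = -⁅⁅f, v⁆, v₁⁆ := by
    rw [leibniz_lie, hvv₁, lie_zero, add_zero, ← neg_lie, ← lie_skew v f]
  rw [leibniz_lie, h1, h1', smul_lie, lie_smul, key]
  simp [smul_neg]
  module
end

section
/- Let g be a simple Lie algebra with sl2-triple {f,2x,e} where f is a short nilpotent (ad(x)-eigenvalues -1,0,1). Then in g((z⁻¹)) the element f + ze is ad-semisimple, with Ker ad(f+ze) = g₀^f((z⁻¹)) ⊕ ((ad f)² - 2z)g₁((z⁻¹)) and Im ad(f+ze) = [f,g₁]((z⁻¹)) ⊕ ((ad f)² + 2z)g₁((z⁻¹)), and these two subspaces give a direct sum decomposition of g((z⁻¹)). -/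
open scoped TensorProduct

attribute [-instance] HahnSeries.instModule

/-!
Write `T = ad (f + z e)`. By sl₂-theory for the short grading, every `y ∈ g` is
`a + v₁ + [f, v₂] + [f, [f, v₃]]` with `a ∈ g₀^f` and `vᵢ ∈ g₁`, and on these pieces
`T a = 0`, `T v = [f, v]`, `T [f, v] = [f, [f, v]] + 2z v`, `T [f, [f, v]] = 2z [f, v]`.
Hence `T³ = 4z T`. Since `4z ≠ 0`, the polynomial `X³ - 4z X` is separable, so `T` is semisimple
and `ker T ∩ im T = 0`. The given generators lie in `ker T` and `im T` respectively and together
span `g((z⁻¹))`, which forces both equalities and the direct sum.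
-/

theorem Disjoint.eq_of_le_of_sup_eq_top {α : Type*} [Lattice α] [BoundedOrder α]
    [IsModularLattice α] {a b p q : α} (hab : Disjoint a b) (hpa : p ≤ a) (hqb : q ≤ b)
    (hpq : p ⊔ q = ⊤) : p = a := by
  refine le_antisymm hpa (le_of_eq ?_)
  calc a = (p ⊔ q) ⊓ a := by rw [hpq, top_inf_eq]
    _ = p ⊔ q ⊓ a := sup_inf_assoc_of_le q hpa
    _ = p := by rw [(hab.symm.mono_left hqb).eq_bot, sup_bot_eq]

namespace Module.End

variable {K V : Type*} [Field K] [AddCommGroup V] [Module K V]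

theorem disjoint_ker_range_of_pow_three_eq {T : Module.End K V} {c : K} (hc : c ≠ 0)
    (hT : T ^ 3 = c • T) : Disjoint (LinearMap.ker T) (LinearMap.range T) := by
  rw [Submodule.disjoint_def]
  rintro _ hm ⟨n, rfl⟩
  have : c • T n = 0 := by
    rw [← LinearMap.smul_apply, ← hT, pow_succ', mul_apply, sq, mul_apply,
      LinearMap.mem_ker.1 hm, map_zero]
  exact (smul_eq_zero.1 this).resolve_left hc

open Polynomial in
theorem isSemisimple_of_pow_three_eq [NeZero (2 : K)] {T : Module.End K V} {c : K} (hc : c ≠ 0)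
    (hT : T ^ 3 = c • T) : T.IsSemisimple := by
  have hsep : (X * (X ^ 2 - C c)).Separable :=
    separable_X.mul (separable_X_pow_sub_C c (by exact_mod_cast two_ne_zero) hc)
      (irreducible_X.coprime_iff_not_dvd.2 (by simp [X_dvd_iff, hc]))
  refine isSemisimple_of_squarefree_aeval_eq_zero hsep.squarefree ?_
  rw [map_mul, map_sub, aeval_X, aeval_C, map_pow, aeval_X, mul_sub, ← pow_succ', hT,
    Algebra.algebraMap_eq_smul_one, mul_smul_comm, mul_one, sub_self]

end Module.End

structure IsShortSl2Triple (K : Type*) {L : Type*} [CommRing K] [LieRing L] [LieAlgebra K L]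
    (e x f : L) : Prop where
  lie_e_f : ⁅e, f⁆ = (2 : K) • x
  lie_x_e : ⁅x, e⁆ = e
  lie_x_f : ⁅x, f⁆ = -f
  exists_eq_add : ∀ y : L, ∃ ym y0 y1 : L, ⁅x, ym⁆ = -ym ∧ ⁅x, y0⁆ = 0 ∧ ⁅x, y1⁆ = y1 ∧
    y = ym + y0 + y1

namespace IsShortSl2Triple

variable {K L : Type*} [Field K] [LieRing L] [LieAlgebra K L] {e x f : L}

theorem lie_x_lie_x_lie_x (ht : IsShortSl2Triple K e x f) (y : L) :
    ⁅x, ⁅x, ⁅x, y⁆⁆⁆ = ⁅x, y⁆ := by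
  obtain ⟨ym, y0, y1, hm, h0, h1, rfl⟩ := ht.exists_eq_add y
  simp only [lie_add, lie_neg, hm, h0, h1, lie_zero, neg_neg]

theorem eq_zero_of_lie_x_eq_smul (ht : IsShortSl2Triple K e x f) {c : K} (hc : c ^ 3 ≠ c)
    {y : L} (hy : ⁅x, y⁆ = c • y) : y = 0 := by
  have h := ht.lie_x_lie_x_lie_x y
  simp only [hy, lie_smul, smul_smul] at h
  rw [← sub_eq_zero, ← sub_smul] at h
  exact (smul_eq_zero.1 h).resolve_left (sub_ne_zero.2 (by rw [← pow_three']; exact hc))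

theorem lie_x_lie_e (ht : IsShortSl2Triple K e x f) (y : L) :
    ⁅x, ⁅e, y⁆⁆ = ⁅e, ⁅x, y⁆⁆ + ⁅e, y⁆ := by
  rw [leibniz_lie, ht.lie_x_e, add_comm]

theorem lie_x_lie_f (ht : IsShortSl2Triple K e x f) (y : L) :
    ⁅x, ⁅f, y⁆⁆ = ⁅f, ⁅x, y⁆⁆ - ⁅f, y⁆ := by
  rw [leibniz_lie, ht.lie_x_f, neg_lie, add_comm, sub_eq_add_neg]

theorem lie_e_lie_f (ht : IsShortSl2Triple K e x f) (y : L) :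
    ⁅e, ⁅f, y⁆⁆ = ⁅f, ⁅e, y⁆⁆ + (2 : K) • ⁅x, y⁆ := by
  rw [leibniz_lie, ht.lie_e_f, smul_lie, add_comm]

theorem lie_x_lie_f_of_lie_x_eq_self (ht : IsShortSl2Triple K e x f) {v : L}
    (hv : ⁅x, v⁆ = v) : ⁅x, ⁅f, v⁆⁆ = 0 := by
  rw [ht.lie_x_lie_f, hv, sub_self]

variable [CharZero K]

theorem lie_e_of_lie_x_eq_self (ht : IsShortSl2Triple K e x f) {v : L} (hv : ⁅x, v⁆ = v) :
    ⁅e, v⁆ = 0 :=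
  ht.eq_zero_of_lie_x_eq_smul (c := 2) (by norm_num) <| by
    rw [ht.lie_x_lie_e, hv, two_smul]

theorem lie_f_of_lie_x_eq_neg (ht : IsShortSl2Triple K e x f) {a : L} (ha : ⁅x, a⁆ = -a) :
    ⁅f, a⁆ = 0 :=
  ht.eq_zero_of_lie_x_eq_smul (c := -2) (by norm_num) <| by
    rw [ht.lie_x_lie_f, ha, lie_neg, neg_smul, two_smul, neg_add, sub_eq_add_neg]

theorem lie_e_lie_f_of_lie_x_eq_self (ht : IsShortSl2Triple K e x f) {v : L}
    (hv : ⁅x, v⁆ = v) : ⁅e, ⁅f, v⁆⁆ = (2 : K) • v := by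
  rw [ht.lie_e_lie_f, ht.lie_e_of_lie_x_eq_self hv, lie_zero, zero_add, hv]

theorem lie_f_lie_f_lie_f_of_lie_x_eq_self (ht : IsShortSl2Triple K e x f) {v : L}
    (hv : ⁅x, v⁆ = v) : ⁅f, ⁅f, ⁅f, v⁆⁆⁆ = 0 :=
  ht.lie_f_of_lie_x_eq_neg <| by
    rw [ht.lie_x_lie_f, ht.lie_x_lie_f_of_lie_x_eq_self hv, lie_zero, zero_sub]

theorem lie_e_lie_f_lie_f_of_lie_x_eq_self (ht : IsShortSl2Triple K e x f) {v : L}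
    (hv : ⁅x, v⁆ = v) : ⁅e, ⁅f, ⁅f, v⁆⁆⁆ = (2 : K) • ⁅f, v⁆ := by
  rw [ht.lie_e_lie_f, ht.lie_e_lie_f_of_lie_x_eq_self hv, ht.lie_x_lie_f_of_lie_x_eq_self hv,
    smul_zero, add_zero, lie_smul]

theorem lie_f_lie_e_of_lie_x_eq_neg (ht : IsShortSl2Triple K e x f) {w : L}
    (hw : ⁅x, w⁆ = -w) : ⁅f, ⁅e, w⁆⁆ = (2 : K) • w := by
  have h := ht.lie_e_lie_f w
  rwa [ht.lie_f_of_lie_x_eq_neg hw, lie_zero, hw, smul_neg, eq_comm, add_neg_eq_zero] at h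

theorem lie_e_of_lie_x_eq_zero (ht : IsShortSl2Triple K e x f) {a : L} (hxa : ⁅x, a⁆ = 0)
    (hfa : ⁅f, a⁆ = 0) : ⁅e, a⁆ = 0 := by
  have hwt : ⁅x, ⁅e, a⁆⁆ = ⁅e, a⁆ := by rw [ht.lie_x_lie_e, hxa, lie_zero, zero_add]
  have hfea : ⁅f, ⁅e, a⁆⁆ = 0 := by
    simpa [hfa, hxa] using (ht.lie_e_lie_f a).symm
  have h := ht.lie_e_lie_f_of_lie_x_eq_self hwt
  rw [hfea, lie_zero, eq_comm, smul_eq_zero] at h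
  exact h.resolve_left two_ne_zero

theorem exists_eq_add_lie_f_of_lie_x_eq_zero (ht : IsShortSl2Triple K e x f) {u : L}
    (hu : ⁅x, u⁆ = 0) :
    ∃ a v : L, ⁅x, a⁆ = 0 ∧ ⁅f, a⁆ = 0 ∧ ⁅x, v⁆ = v ∧ u = a + ⁅f, v⁆ := by
  set v : L := (2 : K)⁻¹ • ⁅e, u⁆
  have hv : ⁅x, v⁆ = v := by rw [lie_smul, ht.lie_x_lie_e, hu, lie_zero, zero_add]
  have hfu : ⁅x, ⁅f, u⁆⁆ = -⁅f, u⁆ := by rw [ht.lie_x_lie_f, hu, lie_zero, zero_sub]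
  have hfeu : ⁅f, ⁅e, u⁆⁆ = ⁅e, ⁅f, u⁆⁆ := by rw [ht.lie_e_lie_f, hu, smul_zero, add_zero]
  refine ⟨u - ⁅f, v⁆, v, ?_, ?_, hv, (sub_add_cancel u _).symm⟩
  · rw [lie_sub, hu, ht.lie_x_lie_f_of_lie_x_eq_self hv, sub_zero]
  · rw [lie_sub, lie_smul, lie_smul, hfeu, ht.lie_f_lie_e_of_lie_x_eq_neg hfu, inv_smul_smul₀
      two_ne_zero, sub_self]

theorem exists_eq_lie_f_lie_f_of_lie_x_eq_neg (ht : IsShortSl2Triple K e x f) {w : L}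
    (hw : ⁅x, w⁆ = -w) : ∃ v : L, ⁅x, v⁆ = v ∧ w = ⁅f, ⁅f, v⁆⁆ := by
  have hew : ⁅x, ⁅e, w⁆⁆ = 0 := by rw [ht.lie_x_lie_e, hw, lie_neg, neg_add_cancel]
  obtain ⟨a, v, -, hfa, hv, hdec⟩ := ht.exists_eq_add_lie_f_of_lie_x_eq_zero hew
  have h := ht.lie_f_lie_e_of_lie_x_eq_neg hw
  rw [hdec, lie_add, hfa, zero_add] at h
  refine ⟨(2 : K)⁻¹ • v, by rw [lie_smul, hv], ?_⟩
  rw [lie_smul, lie_smul, h, inv_smul_smul₀ two_ne_zero]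

theorem exists_eq_add_add_add (ht : IsShortSl2Triple K e x f) (y : L) :
    ∃ a v₁ v₂ v₃ : L, ⁅x, a⁆ = 0 ∧ ⁅f, a⁆ = 0 ∧ ⁅x, v₁⁆ = v₁ ∧ ⁅x, v₂⁆ = v₂ ∧ ⁅x, v₃⁆ = v₃ ∧
      y = a + v₁ + ⁅f, v₂⁆ + ⁅f, ⁅f, v₃⁆⁆ := by
  obtain ⟨ym, y0, y1, hm, h0, h1, rfl⟩ := ht.exists_eq_add y
  obtain ⟨v₃, hv₃, rfl⟩ := ht.exists_eq_lie_f_lie_f_of_lie_x_eq_neg hm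
  obtain ⟨a, v₂, hxa, hfa, hv₂, rfl⟩ := ht.exists_eq_add_lie_f_of_lie_x_eq_zero h0
  exact ⟨a, y1, v₂, v₃, hxa, hfa, h1, hv₂, hv₃, by abel⟩

end IsShortSl2Triple

open TensorProduct LieAlgebra

theorem ad_one_tmul_add_tmul_apply_one_tmul {K L : Type*} (A : Type*) [CommRing K] [LieRing L]
    [LieAlgebra K L] [CommRing A] [Algebra K A] (e f : L) (z : A) (y : L) :
    ad A (A ⊗[K] L) (1 ⊗ₜ f + z ⊗ₜ e) (1 ⊗ₜ y) = 1 ⊗ₜ ⁅f, y⁆ + z • (1 ⊗ₜ[K] ⁅e, y⁆) := by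
  rw [ad_apply, add_lie, ExtendScalars.bracket_tmul, ExtendScalars.bracket_tmul, one_mul, mul_one,
    smul_tmul', smul_eq_mul, mul_one]

theorem Submodule.eq_top_of_one_tmul_mem {R A M : Type*} [CommSemiring R] [Semiring A]
    [Algebra R A] [AddCommMonoid M] [Module R M] {P : Submodule A (A ⊗[R] M)}
    (h : ∀ m : M, (1 : A) ⊗ₜ[R] m ∈ P) : P = ⊤ := by
  rw [eq_top_iff, ← Submodule.baseChange_top, Submodule.baseChange_eq_span, Submodule.span_le]
  rintro _ ⟨m, -, rfl⟩
  exact h m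

/-- With `A = F((z⁻¹))`, these span `g₀^f((z⁻¹)) ⊕ ((ad f)² - 2z)g₁((z⁻¹))`, and
`imageGenerators` span `[f, g₁]((z⁻¹)) ⊕ ((ad f)² + 2z)g₁((z⁻¹))`. -/
def kernelGenerators (K : Type*) {L A : Type*} [CommRing K] [LieRing L] [LieAlgebra K L]
    [CommRing A] [Algebra K A] (x f : L) (z : A) : Set (A ⊗[K] L) :=
  {w | ∃ a : L, ⁅x, a⁆ = 0 ∧ ⁅f, a⁆ = 0 ∧ w = (1 : A) ⊗ₜ[K] a} ∪
    {w | ∃ v : L, ⁅x, v⁆ = v ∧ w = (1 : A) ⊗ₜ[K] ⁅f, ⁅f, v⁆⁆ - ((2 : A) * z) • ((1 : A) ⊗ₜ[K] v)}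

def imageGenerators (K : Type*) {L A : Type*} [CommRing K] [LieRing L] [LieAlgebra K L]
    [CommRing A] [Algebra K A] (x f : L) (z : A) : Set (A ⊗[K] L) :=
  {w | ∃ v : L, ⁅x, v⁆ = v ∧ w = (1 : A) ⊗ₜ[K] ⁅f, v⁆} ∪
    {w | ∃ v : L, ⁅x, v⁆ = v ∧ w = (1 : A) ⊗ₜ[K] ⁅f, ⁅f, v⁆⁆ + ((2 : A) * z) • ((1 : A) ⊗ₜ[K] v)}

theorem one_tmul_two_smul {R A M : Type*} [CommSemiring R] [Semiring A] [Algebra R A]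
    [AddCommMonoid M] [Module R M] (m : M) :
    (1 : A) ⊗ₜ[R] ((2 : R) • m) = (2 : A) • ((1 : A) ⊗ₜ[R] m) := by
  rw [two_smul, two_smul, tmul_add]

section Loop

variable {K L A : Type*} [Field K] [CharZero K] [LieRing L] [LieAlgebra K L] [CommRing A]
  [Algebra K A] {e x f : L} {z : A} {T : Module.End A (A ⊗[K] L)}

namespace IsShortSl2Triple

theorem apply_one_tmul_of_lie_x_eq_zero (ht : IsShortSl2Triple K e x f)
    (hT : ∀ y, T (1 ⊗ₜ y) = 1 ⊗ₜ ⁅f, y⁆ + z • (1 ⊗ₜ[K] ⁅e, y⁆)) {a : L} (hxa : ⁅x, a⁆ = 0)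
    (hfa : ⁅f, a⁆ = 0) : T (1 ⊗ₜ a) = 0 := by
  rw [hT, hfa, ht.lie_e_of_lie_x_eq_zero hxa hfa, tmul_zero, smul_zero, add_zero]

theorem apply_one_tmul_of_lie_x_eq_self (ht : IsShortSl2Triple K e x f)
    (hT : ∀ y, T (1 ⊗ₜ y) = 1 ⊗ₜ ⁅f, y⁆ + z • (1 ⊗ₜ[K] ⁅e, y⁆)) {v : L} (hv : ⁅x, v⁆ = v) :
    T (1 ⊗ₜ v) = 1 ⊗ₜ ⁅f, v⁆ := by
  rw [hT, ht.lie_e_of_lie_x_eq_self hv, tmul_zero, smul_zero, add_zero]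

theorem apply_one_tmul_lie_f (ht : IsShortSl2Triple K e x f)
    (hT : ∀ y, T (1 ⊗ₜ y) = 1 ⊗ₜ ⁅f, y⁆ + z • (1 ⊗ₜ[K] ⁅e, y⁆)) {v : L} (hv : ⁅x, v⁆ = v) :
    T (1 ⊗ₜ ⁅f, v⁆) = 1 ⊗ₜ ⁅f, ⁅f, v⁆⁆ + (2 * z) • (1 ⊗ₜ[K] v) := by
  rw [hT, ht.lie_e_lie_f_of_lie_x_eq_self hv, one_tmul_two_smul, smul_smul, mul_comm]

theorem apply_one_tmul_lie_f_lie_f (ht : IsShortSl2Triple K e x f)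
    (hT : ∀ y, T (1 ⊗ₜ y) = 1 ⊗ₜ ⁅f, y⁆ + z • (1 ⊗ₜ[K] ⁅e, y⁆)) {v : L} (hv : ⁅x, v⁆ = v) :
    T (1 ⊗ₜ ⁅f, ⁅f, v⁆⁆) = (2 * z) • (1 ⊗ₜ[K] ⁅f, v⁆) := by
  rw [hT, ht.lie_f_lie_f_lie_f_of_lie_x_eq_self hv, ht.lie_e_lie_f_lie_f_of_lie_x_eq_self hv,
    tmul_zero, zero_add, one_tmul_two_smul, smul_smul, mul_comm]

theorem pow_three_eq (ht : IsShortSl2Triple K e x f)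
    (hT : ∀ y, T (1 ⊗ₜ y) = 1 ⊗ₜ ⁅f, y⁆ + z • (1 ⊗ₜ[K] ⁅e, y⁆)) : T ^ 3 = (4 * z) • T := by
  set S := T ^ 3 - (4 * z) • T
  have hST : ∀ w, S w = 0 → S (T w) = 0 := fun w hw => by
    have hcomm : Commute T S :=
      ((Commute.refl T).pow_right 3).sub_right ((Commute.refl T).smul_right _)
    rw [← Module.End.mul_apply, ← hcomm.eq, Module.End.mul_apply, hw, map_zero]
  have hSv : ∀ v : L, ⁅x, v⁆ = v → S (1 ⊗ₜ v) = 0 := fun v hv => by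
    have h3 : (T ^ 3) (1 ⊗ₜ v) = (4 * z) • (1 ⊗ₜ[K] ⁅f, v⁆) := by
      rw [pow_succ', Module.End.mul_apply, sq, Module.End.mul_apply,
        ht.apply_one_tmul_of_lie_x_eq_self hT hv, ht.apply_one_tmul_lie_f hT hv, map_add,
        map_smul, ht.apply_one_tmul_lie_f_lie_f hT hv, ht.apply_one_tmul_of_lie_x_eq_self hT hv,
        ← add_smul]
      ring_nf
    rw [LinearMap.sub_apply, h3, LinearMap.smul_apply, ht.apply_one_tmul_of_lie_x_eq_self hT hv,
      sub_self]
  -- `ker S` is `T`-stable, so with `1 ⊗ v` it contains `1 ⊗ [f, v]` and `1 ⊗ [f, [f, v]]`.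
  have hS : ∀ y : L, S (1 ⊗ₜ y) = 0 := fun y => by
    obtain ⟨a, v₁, v₂, v₃, hxa, hfa, hv₁, hv₂, hv₃, rfl⟩ := ht.exists_eq_add_add_add y
    have ha : S (1 ⊗ₜ a) = 0 := by
      rw [LinearMap.sub_apply, LinearMap.smul_apply, pow_succ, Module.End.mul_apply,
        ht.apply_one_tmul_of_lie_x_eq_zero hT hxa hfa, map_zero, smul_zero, sub_zero]
    have hv₂' : S (1 ⊗ₜ ⁅f, v₂⁆) = 0 := by
      rw [← ht.apply_one_tmul_of_lie_x_eq_self hT hv₂]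
      exact hST _ (hSv v₂ hv₂)
    have hv₃' : S (1 ⊗ₜ ⁅f, ⁅f, v₃⁆⁆) = 0 := by
      have h : (1 : A) ⊗ₜ[K] ⁅f, ⁅f, v₃⁆⁆ = T (T (1 ⊗ₜ v₃)) - (2 * z) • (1 ⊗ₜ[K] v₃) := by
        rw [ht.apply_one_tmul_of_lie_x_eq_self hT hv₃, ht.apply_one_tmul_lie_f hT hv₃,
          add_sub_cancel_right]
      rw [h, map_sub, map_smul, hST _ (hST _ (hSv v₃ hv₃)), hSv v₃ hv₃, smul_zero, sub_zero]
    rw [tmul_add, tmul_add, tmul_add, map_add, map_add, map_add, ha, hSv v₁ hv₁, hv₂', hv₃',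
      add_zero, add_zero, add_zero]
  rw [← sub_eq_zero, ← LinearMap.ker_eq_top]
  exact Submodule.eq_top_of_one_tmul_mem hS

theorem span_kernelGenerators_le_ker (ht : IsShortSl2Triple K e x f)
    (hT : ∀ y, T (1 ⊗ₜ y) = 1 ⊗ₜ ⁅f, y⁆ + z • (1 ⊗ₜ[K] ⁅e, y⁆)) :
    Submodule.span A (kernelGenerators K x f z) ≤ LinearMap.ker T := by
  rw [Submodule.span_le]
  rintro _ (⟨a, hxa, hfa, rfl⟩ | ⟨v, hv, rfl⟩)
  · exact ht.apply_one_tmul_of_lie_x_eq_zero hT hxa hfa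
  · rw [SetLike.mem_coe, LinearMap.mem_ker, map_sub, map_smul,
      ht.apply_one_tmul_lie_f_lie_f hT hv, ht.apply_one_tmul_of_lie_x_eq_self hT hv, sub_self]

theorem span_imageGenerators_le_range (ht : IsShortSl2Triple K e x f)
    (hT : ∀ y, T (1 ⊗ₜ y) = 1 ⊗ₜ ⁅f, y⁆ + z • (1 ⊗ₜ[K] ⁅e, y⁆)) :
    Submodule.span A (imageGenerators K x f z) ≤ LinearMap.range T := by
  rw [Submodule.span_le]
  rintro _ (⟨v, hv, rfl⟩ | ⟨v, hv, rfl⟩)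
  · exact ⟨_, ht.apply_one_tmul_of_lie_x_eq_self hT hv⟩
  · exact ⟨_, ht.apply_one_tmul_lie_f hT hv⟩

end IsShortSl2Triple

end Loop

theorem IsShortSl2Triple.span_kernelGenerators_sup_span_imageGenerators {K L A : Type*} [Field K]
    [CharZero K] [LieRing L] [LieAlgebra K L] [Field A] [Algebra K A] {e x f : L} {z : A}
    (ht : IsShortSl2Triple K e x f) (hz : z ≠ 0) :
    Submodule.span A (kernelGenerators K x f z) ⊔ Submodule.span A (imageGenerators K x f z) =
      ⊤ := by
  set P := Submodule.span A (kernelGenerators K x f z) ⊔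
    Submodule.span A (imageGenerators K x f z)
  have : CharZero A := charZero_of_injective_algebraMap (algebraMap K A).injective
  have h2 : (2 : A) ≠ 0 := two_ne_zero
  have hk : ∀ w ∈ kernelGenerators K x f z, w ∈ P := fun w hw =>
    Submodule.mem_sup_left (Submodule.subset_span hw)
  have hr : ∀ w ∈ imageGenerators K x f z, w ∈ P := fun w hw =>
    Submodule.mem_sup_right (Submodule.subset_span hw)
  have hv : ∀ v : L, ⁅x, v⁆ = v → 1 ⊗ₜ v ∈ P := fun v hv => by
    have h : (2 * (2 * z)) • ((1 : A) ⊗ₜ[K] v) =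
        (1 ⊗ₜ ⁅f, ⁅f, v⁆⁆ + (2 * z) • (1 ⊗ₜ[K] v)) -
          (1 ⊗ₜ ⁅f, ⁅f, v⁆⁆ - (2 * z) • (1 ⊗ₜ[K] v)) := by
      module
    rw [← Submodule.smul_mem_iff P (mul_ne_zero h2 (mul_ne_zero h2 hz)), h]
    exact P.sub_mem (hr _ (Or.inr ⟨v, hv, rfl⟩)) (hk _ (Or.inr ⟨v, hv, rfl⟩))
  have hffv : ∀ v : L, ⁅x, v⁆ = v → 1 ⊗ₜ ⁅f, ⁅f, v⁆⁆ ∈ P := fun v hv => by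
    have h : (2 : A) • ((1 : A) ⊗ₜ[K] ⁅f, ⁅f, v⁆⁆) =
        (1 ⊗ₜ ⁅f, ⁅f, v⁆⁆ - (2 * z) • (1 ⊗ₜ[K] v)) +
          (1 ⊗ₜ ⁅f, ⁅f, v⁆⁆ + (2 * z) • (1 ⊗ₜ[K] v)) := by
      module
    rw [← Submodule.smul_mem_iff P h2, h]
    exact P.add_mem (hk _ (Or.inr ⟨v, hv, rfl⟩)) (hr _ (Or.inr ⟨v, hv, rfl⟩))
  refine Submodule.eq_top_of_one_tmul_mem fun y => ?_
  obtain ⟨a, v₁, v₂, v₃, hxa, hfa, hv₁, hv₂, hv₃, rfl⟩ := ht.exists_eq_add_add_add y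
  simp only [tmul_add]
  exact P.add_mem (P.add_mem (P.add_mem (hk _ (Or.inl ⟨a, hxa, hfa, rfl⟩)) (hv v₁ hv₁))
    (hr _ (Or.inl ⟨v₂, hv₂, rfl⟩))) (hffv v₃ hv₃)

theorem stmt8_general {F : Type*} [Field F] [CharZero F]
    {g : Type*} [LieRing g] [LieAlgebra F g]
    (e x f : g)
    (hef : ⁅e, f⁆ = (2 : F) • x) (hxe : ⁅x, e⁆ = e) (hxf : ⁅x, f⁆ = -f)
    (hdec : ∀ y : g, ∃ ym y0 y1 : g, ⁅x, ym⁆ = -ym ∧ ⁅x, y0⁆ = 0 ∧ ⁅x, y1⁆ = y1 ∧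
      y = ym + y0 + y1)
    (z : LaurentSeries F) (hz : z = HahnSeries.single (-1) 1)
    (Λ : LaurentSeries F ⊗[F] g)
    (hΛ : Λ = (1 : LaurentSeries F) ⊗ₜ[F] f + z ⊗ₜ[F] e)
    (Hk Hr : Submodule (LaurentSeries F) (LaurentSeries F ⊗[F] g))
    (hHk : Hk = Submodule.span (LaurentSeries F)
      ({w | ∃ a : g, ⁅x, a⁆ = 0 ∧ ⁅f, a⁆ = 0 ∧ w = (1 : LaurentSeries F) ⊗ₜ[F] a}
        ∪ {w | ∃ v : g, ⁅x, v⁆ = v ∧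
            w = (1 : LaurentSeries F) ⊗ₜ[F] ⁅f, ⁅f, v⁆⁆
              - ((2 : LaurentSeries F) * z) • ((1 : LaurentSeries F) ⊗ₜ[F] v)}))
    (hHr : Hr = Submodule.span (LaurentSeries F)
      ({w | ∃ v : g, ⁅x, v⁆ = v ∧ w = (1 : LaurentSeries F) ⊗ₜ[F] ⁅f, v⁆}
        ∪ {w | ∃ v : g, ⁅x, v⁆ = v ∧
            w = (1 : LaurentSeries F) ⊗ₜ[F] ⁅f, ⁅f, v⁆⁆
              + ((2 : LaurentSeries F) * z) • ((1 : LaurentSeries F) ⊗ₜ[F] v)})) :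
    (LieAlgebra.ad (LaurentSeries F) (LaurentSeries F ⊗[F] g) Λ).IsSemisimple ∧
    LinearMap.ker (LieAlgebra.ad (LaurentSeries F) (LaurentSeries F ⊗[F] g) Λ) = Hk ∧
    LinearMap.range (LieAlgebra.ad (LaurentSeries F) (LaurentSeries F ⊗[F] g) Λ) = Hr ∧
    IsCompl Hk Hr := by
  subst hΛ hHk hHr
  have ht : IsShortSl2Triple F e x f := ⟨hef, hxe, hxf, hdec⟩
  have : CharZero (LaurentSeries F) :=
    charZero_of_injective_algebraMap (algebraMap F (LaurentSeries F)).injective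
  have hz0 : z ≠ 0 := hz ▸ HahnSeries.single_ne_zero one_ne_zero
  have h4z : (4 : LaurentSeries F) * z ≠ 0 := mul_ne_zero (by norm_num) hz0
  have hcube := ht.pow_three_eq (ad_one_tmul_add_tmul_apply_one_tmul (LaurentSeries F) e f z)
  have hdisj := Module.End.disjoint_ker_range_of_pow_three_eq h4z hcube
  have hker := ht.span_kernelGenerators_le_ker (ad_one_tmul_add_tmul_apply_one_tmul _ e f z)
  have hrange := ht.span_imageGenerators_le_range (ad_one_tmul_add_tmul_apply_one_tmul _ e f z)
  have htop := ht.span_kernelGenerators_sup_span_imageGenerators hz0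
  exact ⟨Module.End.isSemisimple_of_pow_three_eq h4z hcube,
    (hdisj.eq_of_le_of_sup_eq_top hker hrange htop).symm,
    (hdisj.symm.eq_of_le_of_sup_eq_top hrange hker (by rwa [sup_comm])).symm,
    ⟨hdisj.mono hker hrange, codisjoint_iff.2 htop⟩⟩

/-- For a short nilpotent f, the element f + ze of g((z⁻¹)) is ad-semisimple,
with kernel g₀^f((z⁻¹)) ⊕ ((ad f)² - 2z)g₁((z⁻¹)) and image
[f,g₁]((z⁻¹)) ⊕ ((ad f)² + 2z)g₁((z⁻¹)), and these give a direct sum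
decomposition of g((z⁻¹)). -/
theorem stmt8 {F : Type*} [Field F] [CharZero F] [IsAlgClosed F]
    {g : Type*} [LieRing g] [LieAlgebra F g] [FiniteDimensional F g]
    [LieAlgebra.IsSimple F g]
    (e x f : g)
    (hef : ⁅e, f⁆ = (2 : F) • x) (hxe : ⁅x, e⁆ = e) (hxf : ⁅x, f⁆ = -f)
    (hdec : ∀ y : g, ∃ ym y0 y1 : g, ⁅x, ym⁆ = -ym ∧ ⁅x, y0⁆ = 0 ∧ ⁅x, y1⁆ = y1 ∧
      y = ym + y0 + y1)
    (z : LaurentSeries F) (hz : z = HahnSeries.single (-1) 1)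
    (Λ : LaurentSeries F ⊗[F] g)
    (hΛ : Λ = (1 : LaurentSeries F) ⊗ₜ[F] f + z ⊗ₜ[F] e)
    (Hk Hr : Submodule (LaurentSeries F) (LaurentSeries F ⊗[F] g))
    (hHk : Hk = Submodule.span (LaurentSeries F)
      ({w | ∃ a : g, ⁅x, a⁆ = 0 ∧ ⁅f, a⁆ = 0 ∧ w = (1 : LaurentSeries F) ⊗ₜ[F] a}
        ∪ {w | ∃ v : g, ⁅x, v⁆ = v ∧
            w = (1 : LaurentSeries F) ⊗ₜ[F] ⁅f, ⁅f, v⁆⁆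
              - ((2 : LaurentSeries F) * z) • ((1 : LaurentSeries F) ⊗ₜ[F] v)}))
    (hHr : Hr = Submodule.span (LaurentSeries F)
      ({w | ∃ v : g, ⁅x, v⁆ = v ∧ w = (1 : LaurentSeries F) ⊗ₜ[F] ⁅f, v⁆}
        ∪ {w | ∃ v : g, ⁅x, v⁆ = v ∧
            w = (1 : LaurentSeries F) ⊗ₜ[F] ⁅f, ⁅f, v⁆⁆
              + ((2 : LaurentSeries F) * z) • ((1 : LaurentSeries F) ⊗ₜ[F] v)})) :
    (LieAlgebra.ad (LaurentSeries F) (LaurentSeries F ⊗[F] g) Λ).IsSemisimple ∧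
    LinearMap.ker (LieAlgebra.ad (LaurentSeries F) (LaurentSeries F ⊗[F] g) Λ) = Hk ∧
    LinearMap.range (LieAlgebra.ad (LaurentSeries F) (LaurentSeries F ⊗[F] g) Λ) = Hr ∧
    IsCompl Hk Hr :=
  stmt8_general e x f hef hxe hxf hdec z hz Λ hΛ Hk Hr hHk hHr
end

section
/- Let g be a Lie algebra with sl2-triple {f,2x,e}, f minimal nilpotent, with invariant form (·|·). Suppose s ∈ g_{1/2} is embeddable, i.e. there exists s* ∈ g_{-1/2} with [s,s*] = 2x. Then {2s*, 4x, s} is an sl2-triple, and the centralizer of s in g₀ is contained in the centralizer of f in g₀ (equivalently, (x|a) = 0 for all a ∈ g₀ with [s,a]=0). -/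
/-- If s ∈ g_{1/2} is embeddable, i.e. [s,s*] = 2x with s* ∈ g_{-1/2}, then
{2s*, 4x, s} is an sl₂-triple, and the centralizer of s in g₀ is contained in
the centralizer of f in g₀, equivalently (x|a) = 0 whenever a ∈ g₀ and [s,a] = 0. -/
theorem stmt10 {F : Type*} [Field F] [CharZero F]
    {g : Type*} [LieRing g] [LieAlgebra F g] [FiniteDimensional F g]
    [LieAlgebra.IsSimple F g]
    (B : g →ₗ[F] g →ₗ[F] F)
    (hsymm : ∀ a b : g, B a b = B b a)
    (hinv : ∀ a b c : g, B ⁅a, b⁆ c = B a ⁅b, c⁆)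
    (hnondeg : ∀ a : g, (∀ b : g, B a b = 0) → a = 0)
    (e x f : g)
    (hef : ⁅e, f⁆ = (2 : F) • x) (hxe : ⁅x, e⁆ = e) (hxf : ⁅x, f⁆ = -f)
    (s sstar : g)
    (hs : ⁅x, s⁆ = (1 / 2 : F) • s) (hsstar : ⁅x, sstar⁆ = (-(1 / 2 : F)) • sstar)
    (hss : ⁅s, sstar⁆ = (2 : F) • x) :
    ⁅(4 : F) • x, s⁆ = (2 : F) • s ∧
    ⁅(4 : F) • x, (2 : F) • sstar⁆ = (-(2 : F)) • ((2 : F) • sstar) ∧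
    ⁅s, (2 : F) • sstar⁆ = (4 : F) • x ∧
    (∀ a : g, ⁅x, a⁆ = 0 → ⁅s, a⁆ = 0 → B x a = 0) := by
  refine ⟨?_, ?_, ?_, ?_⟩
  · rw [smul_lie, hs, smul_smul]; norm_num
  · rw [smul_lie, lie_smul, hsstar, smul_smul, smul_smul, smul_smul]; norm_num
  · rw [lie_smul, hss, smul_smul]; norm_num
  · intro a hxa hsa
    have h1 : B ⁅sstar, s⁆ a = 0 := by rw [hinv, hsa, map_zero]
    have h2 : ⁅sstar, s⁆ = (-(2:F)) • x := by rw [← lie_skew, hss, neg_smul]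
    rw [h2] at h1
    simpa using h1
end

section
/- In the setting of a minimal nilpotent f and an embeddable element s ∈ g_{1/2} (with [s,s*]=2x, s* ∈ g_{-1/2}), for every u in the centralizer g_{1/2}^s = {u ∈ g_{1/2} : [s,u]=0}, one has [f,[s,[f,u]]] = 0; that is, [s,[f,u]] lies in g₀^f. -/
/-!
The element `t = [s,[f,u]]` lies in `g₀`, and invariance together with `[s,u] = 0` makes it
orthogonal to `x`. Since `[f,t]` lies in `g_{-1} = F f` and `(e | [f,t]) = 2 (x | t) = 0`, it
suffices that `(e | f) ≠ 0`. The functional `(e | ·)` kills the range of `ad x + 1`, whose kernel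
is `F f`; so `(e | f) ≠ 0` once `f` is not in that range, i.e. once `ad x` has no Jordan block at
the eigenvalue `-1`. Such a block, `[x,k] = -k + f`, is ruled out by an `sl₂`-ladder argument:
a weight vector `w` of weight `μ` with `2μ ∉ ℕ` and `[f,[e,w]] = 0` must vanish in a
finite-dimensional module. This gives first
`[f,k] = 0`, and then, with the roles of `e` and `f` exchanged, that the weight vector
`z = (ad e)³ k` of weight `2` vanishes; but `[f,z] = 12 e`.
-/

open LieAlgebra LieModule Module
open LinearMap (ker range mem_ker ker_eq_top finrank_range_add_finrank_ker)

theorem LinearMap.ker_sup_range_eq_top_of_disjoint {K V : Type*} [DivisionRing K]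
    [AddCommGroup V] [Module K V] [FiniteDimensional K V] (T : V →ₗ[K] V)
    (h : Disjoint (ker T) (range T)) : ker T ⊔ range T = ⊤ :=
  Submodule.eq_top_of_disjoint _ _
    (by rw [add_comm]; exact (finrank_range_add_finrank_ker T).ge) h

section Ladder

variable {F L M : Type*} [Field F] [CharZero F] [LieRing L] [LieAlgebra F L]
  [AddCommGroup M] [Module F M] [LieRingModule L M] [LieModule F L M] [FiniteDimensional F M]

/-- The vectors `f^j w` have distinct weights `μ - j`, and `[e, f^(j+1) w] = (j+1)(2μ - j) f^j w`
as for a primitive vector, so none of them vanishes unless `w = 0`. -/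
theorem eq_zero_of_lie_f_lie_e_eq_zero {x e f : L} (hxf : ⁅x, f⁆ = -f)
    (hef : ⁅e, f⁆ = (2 : F) • x) {μ : F} (hμ : ∀ n : ℕ, (n : F) ≠ 2 * μ) {w : M}
    (hxw : ⁅x, w⁆ = μ • w) (hfew : ⁅f, ⁅e, w⁆⁆ = 0) : w = 0 := by
  set W : ℕ → M := fun j ↦ (⁅f, ·⁆)^[j] w with hW
  have W_succ (j : ℕ) : W (j + 1) = ⁅f, W j⁆ := Function.iterate_succ_apply' _ _ _
  have lie_x_W (j : ℕ) : ⁅x, W j⁆ = (μ - j) • W j := by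
    induction j with
    | zero => rw [Nat.cast_zero, sub_zero]; exact hxw
    | succ j ih =>
      rw [W_succ, leibniz_lie, hxf, ih, neg_lie, lie_smul]
      push_cast
      module
  have lie_e_W (j : ℕ) : ⁅e, W (j + 1)⁆ = ((j + 1) * (2 * μ - j)) • W j := by
    induction j with
    | zero =>
      rw [W_succ, leibniz_lie, hef, smul_lie]
      simp [hW, hxw, hfew, smul_smul]
    | succ j ih =>
      rw [W_succ (j + 1), leibniz_lie, hef, smul_lie, lie_x_W, ih, lie_smul, ← W_succ]
      push_cast
      module
  by_contra hw
  have W_ne_zero (j : ℕ) : W j ≠ 0 := by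
    induction j with
    | zero => exact hw
    | succ j ih =>
      intro h
      have := lie_e_W j
      rw [h, lie_zero, eq_comm, smul_eq_zero] at this
      exact this.elim (mul_ne_zero (Nat.cast_add_one_ne_zero j) (sub_ne_zero.2 (hμ j).symm)) ih
  refine Module.Finite.not_linearIndependent_of_infinite (R := F) W ?_
  refine (toEnd F L M x).eigenvectors_linearIndependent' (fun j : ℕ ↦ μ - j)
    (fun a b h ↦ by simpa using h) W fun j ↦ ⟨?_, W_ne_zero j⟩
  rw [End.mem_eigenspace_iff, toEnd_apply_apply]
  exact lie_x_W j

end Ladder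

section MinimalGrading

variable {F g : Type*} [Field F] [CharZero F] [LieRing g] [LieAlgebra F g]

theorem e_eq_zero_of_lie_x_eq_neg_add_f [FiniteDimensional F g] {e x f : g}
    (hef : ⁅e, f⁆ = (2 : F) • x) (hxe : ⁅x, e⁆ = e) (hxf : ⁅x, f⁆ = -f)
    (hgm1 : ∀ w : g, ⁅x, w⁆ = -w → ∃ c : F, w = c • f)
    {k : g} (hk : ⁅x, k⁆ = -k + f) : e = 0 := by
  have hfe : ⁅f, e⁆ = -((2 : F) • x) := by rw [← lie_skew, hef]
  have hex : ⁅e, x⁆ = -e := by rw [← lie_skew, hxe]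
  have hfk : ⁅f, k⁆ = 0 := by
    have hxfk : ⁅x, ⁅f, k⁆⁆ = (-2 : F) • ⁅f, k⁆ := by
      rw [leibniz_lie, hxf, hk, neg_lie, lie_add, lie_neg, lie_self]
      module
    obtain ⟨c, hc⟩ : ∃ c : F, ⁅e, ⁅f, k⁆⁆ = c • f := by
      apply hgm1
      rw [leibniz_lie, hxe, hxfk, lie_smul]
      module
    refine eq_zero_of_lie_f_lie_e_eq_zero hxf hef (fun n h ↦ ?_) hxfk (by simp [hc])
    norm_num at h
    exact_mod_cast h
  set q : g := ⁅e, k⁆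
  have hxq : ⁅x, q⁆ = (2 : F) • x := by
    rw [leibniz_lie, hxe, hk, lie_add, lie_neg, hef]
    module
  have hfq : ⁅f, q⁆ = (2 : F) • k - (2 : F) • f := by
    rw [leibniz_lie, hfe, hfk, lie_zero, add_zero, neg_lie, smul_lie, hk]
    module
  set m : g := ⁅e, q⁆
  have hxm : ⁅x, m⁆ = m - (2 : F) • e := by
    rw [leibniz_lie, hxe, hxq, lie_smul, hex]
    module
  have hfm : ⁅f, m⁆ = (2 : F) • q - (8 : F) • x := by
    rw [leibniz_lie, hfe, hfq, neg_lie, smul_lie, hxq, lie_sub, lie_smul, lie_smul, hef]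
    module
  set z : g := ⁅e, m⁆
  have hxz : ⁅x, z⁆ = (2 : F) • z := by
    rw [leibniz_lie, hxe, hxm, lie_sub, lie_smul, lie_self, smul_zero]
    module
  have hfz : ⁅f, z⁆ = (12 : F) • e := by
    rw [leibniz_lie, hfe, hfm, neg_lie, smul_lie, hxm, lie_sub, lie_smul, lie_smul, hex]
    module
  have hz : z = 0 := by
    refine eq_zero_of_lie_f_lie_e_eq_zero (x := -x) (e := f) (f := e) (μ := (-2 : F))
      (by rw [neg_lie, hxe]) (by rw [hfe, smul_neg]) (fun n h ↦ ?_)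
      (by rw [neg_lie, hxz]; module) (by simp [hfz])
    norm_num at h
    exact_mod_cast h
  rw [hz, lie_zero, eq_comm, smul_eq_zero] at hfz
  exact hfz.resolve_left (by norm_num)

theorem f_eq_zero_of_e_eq_zero {e x f : g} (hef : ⁅e, f⁆ = (2 : F) • x) (hxf : ⁅x, f⁆ = -f)
    (he : e = 0) : f = 0 := by
  have hx : x = 0 := by
    rw [he, zero_lie, eq_comm, smul_eq_zero] at hef
    exact hef.resolve_left two_ne_zero
  rwa [hx, zero_lie, eq_comm, neg_eq_zero] at hxf

variable (B : g →ₗ[F] g →ₗ[F] F)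

theorem B_e_f_ne_zero [FiniteDimensional F g] (hinv : ∀ a b c : g, B ⁅a, b⁆ c = B a ⁅b, c⁆)
    (hnondeg : ∀ a : g, (∀ b : g, B a b = 0) → a = 0) {e x f : g}
    (hef : ⁅e, f⁆ = (2 : F) • x) (hxe : ⁅x, e⁆ = e) (hxf : ⁅x, f⁆ = -f)
    (hgm1 : ∀ w : g, ⁅x, w⁆ = -w → ∃ c : F, w = c • f) (hf : f ≠ 0) : B e f ≠ 0 := by
  intro hBef
  refine hf (f_eq_zero_of_e_eq_zero hef hxf ?_)
  set T : End F g := ad F g x + 1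
  have hT (a : g) : T a = ⁅x, a⁆ + a := rfl
  by_cases hfT : f ∈ range T
  · obtain ⟨k, hk⟩ := hfT
    refine e_eq_zero_of_lie_x_eq_neg_add_f hef hxe hxf hgm1 (k := k) ?_
    rw [← hk, hT]
    abel
  have hker : ker T ≤ Submodule.span F {f} := by
    intro a ha
    obtain ⟨c, rfl⟩ := hgm1 a (eq_neg_of_add_eq_zero_left ha)
    exact Submodule.smul_mem _ c (Submodule.mem_span_singleton_self f)
  have hdisj : Disjoint (ker T) (range T) := by
    refine Submodule.disjoint_def.2 fun a ha ⟨k, hk⟩ ↦ ?_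
    obtain ⟨c, rfl⟩ := Submodule.mem_span_singleton.1 (hker ha)
    by_contra hc
    refine hfT ⟨c⁻¹ • k, ?_⟩
    rw [map_smul, hk, smul_smul, inv_mul_cancel₀ (left_ne_zero_of_smul hc), one_smul]
  have hBe : ker (B e) = ⊤ := by
    rw [eq_top_iff, ← T.ker_sup_range_eq_top_of_disjoint hdisj]
    refine sup_le (hker.trans ?_) ?_
    · rwa [Submodule.span_singleton_le_iff_mem, mem_ker]
    · rintro _ ⟨k, rfl⟩
      rw [mem_ker, hT, map_add, ← hinv, ← lie_skew, hxe, map_neg, LinearMap.neg_apply,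
        neg_add_cancel]
  exact hnondeg e fun b ↦ by simp [ker_eq_top.1 hBe]

theorem lie_f_eq_zero_of_B_x_eq_zero [FiniteDimensional F g]
    (hinv : ∀ a b c : g, B ⁅a, b⁆ c = B a ⁅b, c⁆) (hnondeg : ∀ a : g, (∀ b : g, B a b = 0) → a = 0)
    {e x f : g} (hef : ⁅e, f⁆ = (2 : F) • x) (hxe : ⁅x, e⁆ = e) (hxf : ⁅x, f⁆ = -f)
    (hgm1 : ∀ w : g, ⁅x, w⁆ = -w → ∃ c : F, w = c • f)
    {t : g} (hxt : ⁅x, t⁆ = 0) (hBxt : B x t = 0) : ⁅f, t⁆ = 0 := by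
  rcases eq_or_ne f 0 with rfl | hf
  · exact zero_lie t
  obtain ⟨c, hc⟩ := hgm1 ⁅f, t⁆ (by rw [leibniz_lie, hxf, hxt, lie_zero, neg_lie, add_zero])
  have : c * B e f = 0 := by
    rw [← smul_eq_mul, ← map_smul, ← hc, ← hinv, hef, map_smul, LinearMap.smul_apply, hBxt,
      smul_zero]
  rw [hc, (mul_eq_zero.1 this).resolve_right (B_e_f_ne_zero B hinv hnondeg hef hxe hxf hgm1 hf),
    zero_smul]

end MinimalGrading

theorem stmt11_general {F : Type*} [Field F] [CharZero F]
    {g : Type*} [LieRing g] [LieAlgebra F g] [FiniteDimensional F g]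
    (B : g →ₗ[F] g →ₗ[F] F)
    (hinv : ∀ a b c : g, B ⁅a, b⁆ c = B a ⁅b, c⁆)
    (hnondeg : ∀ a : g, (∀ b : g, B a b = 0) → a = 0)
    (e x f : g)
    (hef : ⁅e, f⁆ = (2 : F) • x) (hxe : ⁅x, e⁆ = e) (hxf : ⁅x, f⁆ = -f)
    (hgm1 : ∀ w : g, ⁅x, w⁆ = -w → ∃ c : F, w = c • f)
    (s : g)
    (hs : ⁅x, s⁆ = (1 / 2 : F) • s)
    (u : g) (hu : ⁅x, u⁆ = (1 / 2 : F) • u) (hsu : ⁅s, u⁆ = 0) :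
    ⁅f, ⁅s, ⁅f, u⁆⁆⁆ = 0 := by
  have hxfu : ⁅x, ⁅f, u⁆⁆ = (-(1 / 2 : F)) • ⁅f, u⁆ := by
    rw [leibniz_lie, hxf, hu, neg_lie, lie_smul]
    module
  have hx_sfu : ⁅x, ⁅s, ⁅f, u⁆⁆⁆ = 0 := by
    rw [leibniz_lie, hs, hxfu, smul_lie, lie_smul]
    module
  have hBsfu : B s ⁅f, u⁆ = 0 := by
    rw [← hinv, ← lie_skew, map_neg, LinearMap.neg_apply, hinv, hsu, map_zero, neg_zero]
  have hB_x_sfu : B x ⁅s, ⁅f, u⁆⁆ = 0 := by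
    rw [← hinv, hs, map_smul, LinearMap.smul_apply, hBsfu, smul_zero]
  exact lie_f_eq_zero_of_B_x_eq_zero B hinv hnondeg hef hxe hxf hgm1 hx_sfu hB_x_sfu

/-- For a minimal nilpotent f and an embeddable s ∈ g_{1/2} (with [s,s*] = 2x),
every u ∈ g_{1/2} with [s,u] = 0 satisfies [f,[s,[f,u]]] = 0, i.e. [s,[f,u]]
lies in the centralizer g₀^f of f in g₀. -/
theorem stmt11 {F : Type*} [Field F] [CharZero F]
    {g : Type*} [LieRing g] [LieAlgebra F g] [FiniteDimensional F g]
    [LieAlgebra.IsSimple F g]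
    (B : g →ₗ[F] g →ₗ[F] F)
    (hsymm : ∀ a b : g, B a b = B b a)
    (hinv : ∀ a b c : g, B ⁅a, b⁆ c = B a ⁅b, c⁆)
    (hnondeg : ∀ a : g, (∀ b : g, B a b = 0) → a = 0)
    (e x f : g)
    (hef : ⁅e, f⁆ = (2 : F) • x) (hxe : ⁅x, e⁆ = e) (hxf : ⁅x, f⁆ = -f)
    (hgm1 : ∀ w : g, ⁅x, w⁆ = -w → ∃ c : F, w = c • f)
    (s sstar : g)
    (hs : ⁅x, s⁆ = (1 / 2 : F) • s) (hsstar : ⁅x, sstar⁆ = (-(1 / 2 : F)) • sstar)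
    (hss : ⁅s, sstar⁆ = (2 : F) • x)
    (u : g) (hu : ⁅x, u⁆ = (1 / 2 : F) • u) (hsu : ⁅s, u⁆ = 0) :
    ⁅f, ⁅s, ⁅f, u⁆⁆⁆ = 0 :=
  stmt11_general B hinv hnondeg e x f hef hxe hxf hgm1 s hs u hu hsu
end

section
/- Let g = sl_{2n} written in n×n block form, f = [[0,0],[1,0]] (identity in the lower-left block), e = [[0,1],[0,0]], h = diag(1_n,-1_n) = 2x. Let S ∈ gl_n be semisimple with nonzero eigenvalues, and s = [[0,S],[0,0]]. Then the kernel of ad(f + zs) on sl_{2n}((z⁻¹)) is the set of matrices [[A, zSB],[B, A]] with A,B ∈ gl_n((z⁻¹)), [S,A] = [S,B] = 0, tr A = 0. -/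
set_option maxHeartbeats 1000000
set_option synthInstance.maxHeartbeats 400000


private theorem trace_fromBlocks_aux {R m : Type*} [Fintype m] [AddCommMonoid R]
    (A B C D : Matrix m m R) :
    (Matrix.fromBlocks A B C D).trace = A.trace + D.trace := by
  simp [Matrix.trace, Matrix.diag, Fintype.sum_sum_type, Matrix.fromBlocks]

/-- For g = sl_{2n} with f = [[0,0],[1,0]], s = [[0,S],[0,0]] where S is
semisimple with nonzero eigenvalues, the kernel of ad(f+zs) on sl_{2n}((z⁻¹))
consists of the matrices [[A, zSB],[B, A]] with [S,A] = [S,B] = 0 and tr A = 0. -/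
theorem stmt13 {F : Type*} [Field F] [CharZero F] [IsAlgClosed F] (n : ℕ)
    (S : Matrix (Fin n) (Fin n) F)
    (hSss : Module.End.IsSemisimple (Matrix.toLin' S)) (hSunit : IsUnit S)
    (z : LaurentSeries F) (hz : z = HahnSeries.single (-1) 1)
    (Sl : Matrix (Fin n) (Fin n) (LaurentSeries F))
    (hSl : Sl = S.map (algebraMap F (LaurentSeries F)))
    (fM sM : Matrix (Fin n ⊕ Fin n) (Fin n ⊕ Fin n) (LaurentSeries F))
    (hfM : fM = Matrix.fromBlocks 0 0 1 0)
    (hsM : sM = Matrix.fromBlocks 0 Sl 0 0)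
    (X : Matrix (Fin n ⊕ Fin n) (Fin n ⊕ Fin n) (LaurentSeries F))
    (hX : X.trace = 0) :
    ⁅fM + z • sM, X⁆ = 0 ↔
      ∃ A B : Matrix (Fin n) (Fin n) (LaurentSeries F),
        Sl * A = A * Sl ∧ Sl * B = B * Sl ∧ A.trace = 0 ∧
        X = Matrix.fromBlocks A (z • (Sl * B)) B A := by
  have hz0 : z ≠ 0 := by
    rw [hz]; exact HahnSeries.single_ne_zero one_ne_zero
  set A := X.toBlocks₁₁ with hA
  set C := X.toBlocks₁₂ with hC
  set B := X.toBlocks₂₁ with hB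
  set D := X.toBlocks₂₂ with hD
  have hXb : X = Matrix.fromBlocks A C B D := (Matrix.fromBlocks_toBlocks X).symm
  have hM : fM + z • sM = Matrix.fromBlocks 0 (z • Sl) 1 0 := by
    rw [hfM, hsM, Matrix.fromBlocks_smul]
    simp [Matrix.fromBlocks_add]
  constructor
  · intro h
    rw [Ring.lie_def, sub_eq_zero, hM, hXb, Matrix.fromBlocks_multiply,
      Matrix.fromBlocks_multiply] at h
    have h11 := congrArg Matrix.toBlocks₁₁ h
    have h12 := congrArg Matrix.toBlocks₁₂ h
    have h21 := congrArg Matrix.toBlocks₂₁ h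
    have h22 := congrArg Matrix.toBlocks₂₂ h
    simp only [Matrix.toBlocks_fromBlocks₁₁, Matrix.toBlocks_fromBlocks₁₂,
      Matrix.toBlocks_fromBlocks₂₁, Matrix.toBlocks_fromBlocks₂₂,
      Matrix.zero_mul, Matrix.mul_zero, Matrix.one_mul, Matrix.mul_one,
      zero_add, add_zero] at h11 h12 h21 h22
    -- h11 : z • Sl * B = C ; h12 : z • Sl * D = A * (z • Sl)
    -- h21 : A = D ; h22 : C = B * (z • Sl)
    have hcomm : ∀ M : Matrix (Fin n) (Fin n) (LaurentSeries F),
        (z • Sl) * M = M * (z • Sl) → Sl * M = M * Sl := by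
      intro M hMe
      have e1 : (z • Sl) * M = z • (Sl * M) := Matrix.smul_mul z Sl M
      have e2 : M * (z • Sl) = z • (M * Sl) := Matrix.mul_smul M z Sl
      rw [e1, e2] at hMe
      exact smul_right_injective _ hz0 hMe
    have hSA : Sl * A = A * Sl := by
      apply hcomm
      rw [← h21] at h12
      exact h12
    have hSB : Sl * B = B * Sl := by
      apply hcomm
      rw [← h11] at h22
      exact h22
    have htr : A.trace = 0 := by
      rw [hXb, ← h21, trace_fromBlocks_aux] at hX
      have h2 : (2 : LaurentSeries F) ≠ 0 := by
        intro hh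
        have hinj := RingHom.injective (algebraMap F (LaurentSeries F))
        have : (algebraMap F (LaurentSeries F)) 2 = algebraMap F (LaurentSeries F) 0 := by
          simpa [map_ofNat] using hh
        exact two_ne_zero (hinj this)
      have : (2 : LaurentSeries F) * A.trace = 0 := by rw [two_mul]; exact hX
      exact (mul_eq_zero.mp this).resolve_left h2
    refine ⟨A, B, hSA, hSB, htr, ?_⟩
    have e3 : (z • Sl) * B = z • (Sl * B) := Matrix.smul_mul z Sl B
    rw [hXb, ← h21, ← h11, e3]
  · rintro ⟨A', B', hSA, hSB, htr, hXeq⟩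
    rw [Ring.lie_def, sub_eq_zero, hM, hXeq, Matrix.fromBlocks_multiply,
      Matrix.fromBlocks_multiply]
    have eB : (z • Sl) * B' = z • (Sl * B') := Matrix.smul_mul z Sl B'
    have eA : (z • Sl) * A' = z • (Sl * A') := Matrix.smul_mul z Sl A'
    have eA2 : A' * (z • Sl) = z • (A' * Sl) := Matrix.mul_smul A' z Sl
    have eB2 : B' * (z • Sl) = z • (B' * Sl) := Matrix.mul_smul B' z Sl
    simp only [Matrix.zero_mul, Matrix.mul_zero, Matrix.one_mul, Matrix.mul_one,
      zero_add, add_zero, eB, eA, eA2, eB2, hSA, hSB]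
end

section
/- Let g be a simple Lie algebra with minimal nilpotent sl2-triple {f,2x,e} and an embeddable s ∈ g_{1/2} with [s,s*] = 2x. Then the bilinear form χ on g_{1/2}^s defined by χ(u,v) = ([s,[f,u]] | [s,[f,v]]) is symmetric and invariant under the adjoint action of g₀^s, i.e. χ([a,u],v) + χ(u,[a,v]) = 0 for all a ∈ g₀^s and u,v ∈ g_{1/2}^s. -/
/-- For a minimal nilpotent f and an embeddable s ∈ g_{1/2} with [s,s*] = 2x,
the bilinear form χ(u,v) = ([s,[f,u]]|[s,[f,v]]) on g_{1/2}^s is symmetric and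
invariant under the adjoint action of g₀^s. -/
theorem stmt16 {F : Type*} [Field F] [CharZero F]
    {g : Type*} [LieRing g] [LieAlgebra F g] [FiniteDimensional F g]
    [LieAlgebra.IsSimple F g]
    (B : g →ₗ[F] g →ₗ[F] F)
    (hsymm : ∀ a b : g, B a b = B b a)
    (hinv : ∀ a b c : g, B ⁅a, b⁆ c = B a ⁅b, c⁆)
    (hnondeg : ∀ a : g, (∀ b : g, B a b = 0) → a = 0)
    (e x f : g)
    (hef : ⁅e, f⁆ = (2 : F) • x) (hxe : ⁅x, e⁆ = e) (hxf : ⁅x, f⁆ = -f)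
    (hmin : ∀ y : g, ∃ (c₁ c₂ : F) (u a v : g),
      ⁅x, u⁆ = (-(1 / 2 : F)) • u ∧ ⁅x, a⁆ = 0 ∧ ⁅x, v⁆ = (1 / 2 : F) • v ∧
      y = c₁ • f + u + a + v + c₂ • e)
    (s sstar : g)
    (hs : ⁅x, s⁆ = (1 / 2 : F) • s) (hsstar : ⁅x, sstar⁆ = (-(1 / 2 : F)) • sstar)
    (hss : ⁅s, sstar⁆ = (2 : F) • x) :
    (∀ u v : g, ⁅x, u⁆ = (1 / 2 : F) • u → ⁅s, u⁆ = 0 →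
      ⁅x, v⁆ = (1 / 2 : F) • v → ⁅s, v⁆ = 0 →
      B ⁅s, ⁅f, u⁆⁆ ⁅s, ⁅f, v⁆⁆ = B ⁅s, ⁅f, v⁆⁆ ⁅s, ⁅f, u⁆⁆) ∧
    (∀ a u v : g, ⁅x, a⁆ = 0 → ⁅s, a⁆ = 0 →
      ⁅x, u⁆ = (1 / 2 : F) • u → ⁅s, u⁆ = 0 →
      ⁅x, v⁆ = (1 / 2 : F) • v → ⁅s, v⁆ = 0 →
      B ⁅s, ⁅f, ⁅a, u⁆⁆⁆ ⁅s, ⁅f, v⁆⁆ + B ⁅s, ⁅f, u⁆⁆ ⁅s, ⁅f, ⁅a, v⁆⁆⁆ = 0) := by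
  classical
  -- orthogonality of ad x weight spaces
  have wB : ∀ (z y : g) (μ ν : F), ⁅x, z⁆ = μ • z → ⁅x, y⁆ = ν • y → μ + ν ≠ 0 →
      B z y = 0 := by
    intro z y μ ν hz hy hne
    have h1 : B ⁅z, x⁆ y = B z ⁅x, y⁆ := hinv z x y
    have h2 : (⁅z, x⁆ : g) = -(μ • z) := by rw [← lie_skew, hz]
    rw [h2, hy] at h1
    simp only [map_neg, map_smul, LinearMap.neg_apply, LinearMap.smul_apply,
      smul_eq_mul] at h1
    have h3 : (μ + ν) * B z y = 0 := by linear_combination -h1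
    exact (mul_eq_zero.mp h3).resolve_left hne
  -- key fact : g₀^s ⊆ g₀^f
  have key : ∀ a : g, ⁅x, a⁆ = 0 → ⁅s, a⁆ = 0 → ⁅f, a⁆ = 0 := by
    intro a hxa hsa
    by_cases hef0 : B e f = 0
    · -- degenerate case: e = 0 hence x = 0 hence f = 0
      have hee : ⁅x, e⁆ = (1 : F) • e := by rw [hxe, one_smul]
      have he : e = 0 := by
        apply hnondeg
        intro b
        obtain ⟨c₁, c₂, u, a', v, hu, ha', hv, hb⟩ := hmin b
        have h1 : B e u = 0 := wB e u 1 (-(1/2)) hee hu (by norm_num)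
        have h2 : B e a' = 0 := wB e a' 1 0 hee (by rw [ha', zero_smul]) (by norm_num)
        have h3 : B e v = 0 := wB e v 1 (1/2) hee hv (by norm_num)
        have h4 : B e e = 0 := wB e e 1 1 hee hee (by norm_num)
        rw [hb]
        simp [map_add, map_smul, h1, h2, h3, h4, hef0]
      have hx0 : x = 0 := by
        have h := hef
        rw [he, zero_lie] at h
        have h2 : (2 : F) • x = 0 := h.symm
        have : (2 : F) ≠ 0 := two_ne_zero
        exact (smul_eq_zero.mp h2).resolve_left this
      have hf0 : f = 0 := by
        have h := hxf
        rw [hx0, zero_lie] at h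
        exact (neg_eq_zero.mp h.symm)
      rw [hf0, zero_lie]
    · -- main case
      set y : g := ⁅f, a⁆ with hy
      have hyw : ⁅x, y⁆ = (-1 : F) • y := by
        rw [hy, leibniz_lie, hxa, lie_zero, add_zero, hxf, neg_lie, neg_one_smul]
      obtain ⟨c₁, c₂, u, a', v, hu, ha', hv, hdec⟩ := hmin y
      -- z := y - c₁ • f is a weight (-1) vector decomposing into weights -1/2,0,1/2,1
      set z : g := u + a' + v + c₂ • e with hzdef
      have hz : y = c₁ • f + z := by rw [hdec, hzdef]; abel
      have hzw : ⁅x, z⁆ = (-1 : F) • z := by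
        have h := hyw
        rw [hz, lie_add, lie_smul, hxf] at h
        have h2 : ⁅x, z⁆ = (-1 : F) • (c₁ • f + z) - c₁ • (-f) := by
          rw [← h]; abel
        rw [h2]; module
      -- the operator P = (ad x + 1/2)(ad x)(ad x - 1/2)(ad x - 1)
      set A : Module.End F g := LieAlgebra.ad F g x with hA
      have hAapp : ∀ w : g, A w = ⁅x, w⁆ := fun w => rfl
      set P : Module.End F g :=
        (A + (1/2 : F) • 1) * A * (A - (1/2 : F) • 1) * (A - 1) with hP
      have hPeig : ∀ (lam : F) (w : g), ⁅x, w⁆ = lam • w →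
          P w = ((lam + 1/2) * lam * (lam - 1/2) * (lam - 1)) • w := by
        intro lam w hw
        have step : ∀ (c : F) (d : F) (w' : g), ⁅x, w'⁆ = lam • w' →
            (A - c • 1) (d • w') = (d * (lam - c)) • w' := by
          intro c d w' hw'
          simp only [LinearMap.sub_apply, LinearMap.smul_apply, Module.End.one_apply,
            map_smul, hAapp]
          rw [hw']; module
        have step' : ∀ (c : F) (d : F) (w' : g), ⁅x, w'⁆ = lam • w' →
            (A + c • 1) (d • w') = (d * (lam + c)) • w' := by
          intro c d w' hw'
          simp only [LinearMap.add_apply, LinearMap.smul_apply, Module.End.one_apply,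
            map_smul, hAapp]
          rw [hw']; module
        have e1 : (A - 1) w = (1 * (lam - 1)) • w := by
          have := step 1 1 w hw
          simpa using this
        have e2 : (A - (1/2 : F) • 1) ((1 * (lam - 1)) • w) =
            ((1 * (lam - 1)) * (lam - 1/2)) • w := step (1/2) _ w hw
        have e3 : A ((((1 * (lam - 1)) * (lam - 1/2))) • w) =
            (((1 * (lam - 1)) * (lam - 1/2)) * lam) • w := by
          rw [map_smul, hAapp, hw, smul_smul]
        have e4 : (A + (1/2 : F) • 1) ((((1 * (lam - 1)) * (lam - 1/2)) * lam) • w) =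
            ((((1 * (lam - 1)) * (lam - 1/2)) * lam) * (lam + 1/2)) • w :=
          step' (1/2) _ w hw
        have : P w = ((((1 * (lam - 1)) * (lam - 1/2)) * lam) * (lam + 1/2)) • w := by
          rw [hP]
          simp only [Module.End.mul_apply]
          rw [e1, e2, e3, e4]
        rw [this]
        ring_nf
      have hPz : P z = (3/2 : F) • z := by
        have := hPeig (-1) z hzw
        rw [this]
        norm_num
      have hPz0 : P z = 0 := by
        have h1 := hPeig (-(1/2)) u hu
        have h2 : P a' = 0 := by
          have := hPeig 0 a' (by rw [ha', zero_smul])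
          rw [this]; norm_num
        have h3 := hPeig (1/2) v hv
        have h4 := hPeig 1 e (by rw [hxe, one_smul])
        rw [hzdef]
        rw [map_add, map_add, map_add, map_smul, h1, h2, h3, h4]
        norm_num
      have hz0 : z = 0 := by
        rw [hPz0] at hPz
        have : (3/2 : F) ≠ 0 := by norm_num
        exact (smul_eq_zero.mp hPz.symm).resolve_left this
      have hyf : y = c₁ • f := by rw [hz, hz0, add_zero]
      -- B y e = 0
      have hBye : B y e = 0 := by
        have h1 : B ⁅a, f⁆ e = B a ⁅f, e⁆ := hinv a f e
        have h2 : (⁅a, f⁆ : g) = -y := by rw [hy, ← lie_skew]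
        have h3 : (⁅f, e⁆ : g) = -((2 : F) • x) := by rw [← lie_skew, hef]
        rw [h2, h3] at h1
        have h4 : B a ((2 : F) • x) = 0 := by
          have h5 : B ⁅a, s⁆ sstar = B a ⁅s, sstar⁆ := hinv a s sstar
          have h6 : (⁅a, s⁆ : g) = 0 := by rw [← lie_skew, hsa, neg_zero]
          rw [h6, hss] at h5
          simpa using h5.symm
        simp only [map_neg, LinearMap.neg_apply] at h1
        rw [h4] at h1
        simpa using h1
      have hc₁ : c₁ = 0 := by
        rw [hyf] at hBye
        simp only [map_smul, LinearMap.smul_apply, smul_eq_mul] at hBye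
        have hfe : B f e ≠ 0 := by rw [hsymm f e]; exact hef0
        exact (mul_eq_zero.mp hBye).resolve_right hfe
      show y = 0
      rw [hyf, hc₁, zero_smul]
  constructor
  · intro u v _ _ _ _
    exact hsymm _ _
  · intro a u v hxa hsa hxu hsu hxv hsv
    have hfa : ⁅f, a⁆ = 0 := key a hxa hsa
    have haf : (⁅a, f⁆ : g) = 0 := by rw [← lie_skew, hfa, neg_zero]
    have has : (⁅a, s⁆ : g) = 0 := by rw [← lie_skew, hsa, neg_zero]
    have hXu : ⁅s, ⁅f, ⁅a, u⁆⁆⁆ = ⁅a, ⁅s, ⁅f, u⁆⁆⁆ := by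
      have h1 : (⁅f, ⁅a, u⁆⁆ : g) = ⁅a, ⁅f, u⁆⁆ := by
        rw [leibniz_lie, hfa, zero_lie, zero_add]
      rw [h1, leibniz_lie s a, hsa, zero_lie, zero_add]
    have hXv : ⁅s, ⁅f, ⁅a, v⁆⁆⁆ = ⁅a, ⁅s, ⁅f, v⁆⁆⁆ := by
      have h1 : (⁅f, ⁅a, v⁆⁆ : g) = ⁅a, ⁅f, v⁆⁆ := by
        rw [leibniz_lie, hfa, zero_lie, zero_add]
      rw [h1, leibniz_lie s a, hsa, zero_lie, zero_add]
    rw [hXu, hXv]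
    set X : g := ⁅s, ⁅f, u⁆⁆
    set Y : g := ⁅s, ⁅f, v⁆⁆
    have h1 : B ⁅X, a⁆ Y = B X ⁅a, Y⁆ := hinv X a Y
    have h2 : (⁅X, a⁆ : g) = -⁅a, X⁆ := by rw [← lie_skew]
    rw [h2] at h1
    simp only [map_neg, LinearMap.neg_apply] at h1
    rw [← h1]
    ring
end

section
/- Let g be a simple Lie algebra with sl2-triple {f,2x,e}, f minimal nilpotent. Let {v_k} be a basis of g_{1/2} and {v^k} the ω₊-dual basis (ω₊(v_h,v^k) = δ_{hk}, where ω₊(v,w) = (f|[v,w])). Then for every u ∈ g_{-1/2}: Σ_k (u|v^k) v_k = -Σ_k (u|v_k) v^k = [e,u]. -/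
/-- For a minimal nilpotent f, with {v_k} a basis of g_{1/2} and {v^k} the
ω₊-dual basis (ω₊(v_h,v^k) = δ_{hk}), one has, for every u ∈ g_{-1/2}:
Σ_k (u|v^k) v_k = -Σ_k (u|v_k) v^k = [e,u]. -/
theorem stmt17 {F : Type*} [Field F] [CharZero F]
    {g : Type*} [LieRing g] [LieAlgebra F g] [FiniteDimensional F g]
    [LieAlgebra.IsSimple F g]
    (B : g →ₗ[F] g →ₗ[F] F)
    (hsymm : ∀ a b : g, B a b = B b a)
    (hinv : ∀ a b c : g, B ⁅a, b⁆ c = B a ⁅b, c⁆)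
    (hnondeg : ∀ a : g, (∀ b : g, B a b = 0) → a = 0)
    (e x f : g)
    (hef : ⁅e, f⁆ = (2 : F) • x) (hxe : ⁅x, e⁆ = e) (hxf : ⁅x, f⁆ = -f)
    (h32 : ∀ w : g, ⁅x, w⁆ = (3 / 2 : F) • w → w = 0)
    (ι : Type*) [Fintype ι] [DecidableEq ι] (v v' : ι → g)
    (hv : ∀ k, ⁅x, v k⁆ = (1 / 2 : F) • v k)
    (hv' : ∀ k, ⁅x, v' k⁆ = (1 / 2 : F) • v' k)
    (hdual : ∀ h k, B f ⁅v h, v' k⁆ = if h = k then 1 else 0)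
    (hspan : ∀ w : g, ⁅x, w⁆ = (1 / 2 : F) • w → w ∈ Submodule.span F (Set.range v))
    (u : g) (hu : ⁅x, u⁆ = (-(1 / 2 : F)) • u) :
    (∑ k, B u (v' k) • v k) = ⁅e, u⁆ ∧
    (∑ k, B u (v k) • v' k) = -⁅e, u⁆ := by
  have hlsum : ∀ (a : g) (s : ι → g), ⁅a, ∑ i, s i⁆ = ∑ i, ⁅a, s i⁆ := by
    intro a s
    simpa only [LieAlgebra.ad_apply] using map_sum (LieAlgebra.ad F g a) s Finset.univ
  have hsuml : ∀ (s : ι → g) (a : g), ⁅∑ i, s i, a⁆ = ∑ i, ⁅s i, a⁆ := by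
    intro s a
    rw [← lie_skew, hlsum a s, ← Finset.sum_neg_distrib]
    exact Finset.sum_congr rfl fun i _ => lie_skew (s i) a
  -- ad e kills the 1/2 eigenspace (since the 3/2 eigenspace is zero)
  have heig : ∀ w : g, ⁅x, w⁆ = (1 / 2 : F) • w → ⁅e, w⁆ = 0 := by
    intro w hw
    apply h32
    rw [leibniz_lie, hxe, hw, lie_smul]
    module
  -- ⁅e, ⁅f, w⁆⁆ = w on the 1/2 eigenspace
  have hefw : ∀ w : g, ⁅x, w⁆ = (1 / 2 : F) • w → ⁅e, ⁅f, w⁆⁆ = w := by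
    intro w hw
    rw [leibniz_lie, hef, heig w hw, lie_zero, add_zero, smul_lie, hw]
    module
  -- key computation: B f ⁅w, ⁅e,u⁆⁆ = -B u w for w in the 1/2 eigenspace
  have hC : ∀ w : g, ⁅x, w⁆ = (1 / 2 : F) • w → B f ⁅w, ⁅e, u⁆⁆ = -B u w := by
    intro w hw
    have h1 : B f ⁅w, ⁅e, u⁆⁆ = B ⁅f, w⁆ ⁅e, u⁆ := (hinv f w ⁅e, u⁆).symm
    have h2 : B ⁅f, w⁆ ⁅e, u⁆ = B ⁅⁅f, w⁆, e⁆ u := (hinv ⁅f, w⁆ e u).symm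
    have h3 : ⁅⁅f, w⁆, e⁆ = -w := by
      rw [← lie_skew, hefw w hw]
    rw [h1, h2, h3, map_neg, LinearMap.neg_apply, hsymm w u]
  -- ⁅e,u⁆ lies in the 1/2 eigenspace
  have hEU : ⁅x, ⁅e, u⁆⁆ = (1 / 2 : F) • ⁅e, u⁆ := by
    rw [leibniz_lie, hxe, hu, lie_smul]
    module
  -- separation via the right slots v' k
  have hE' : ∀ s : g, s ∈ Submodule.span F (Set.range v) →
      (∀ k, B f ⁅s, v' k⁆ = 0) → s = 0 := by
    intro s hs h0
    obtain ⟨c, hc⟩ := (Submodule.mem_span_range_iff_exists_fun F).mp hs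
    have hck : ∀ k, c k = 0 := by
      intro k
      have hk := h0 k
      rw [← hc] at hk
      simpa [hsuml, smul_lie, hdual, Finset.sum_ite_eq'] using hk
    rw [← hc]
    simp [hck]
  -- separation via the left slots v k
  have hE : ∀ s : g, s ∈ Submodule.span F (Set.range v) →
      (∀ k, B f ⁅v k, s⁆ = 0) → s = 0 := by
    intro s hs h0
    apply hE' s hs
    intro k
    obtain ⟨d, hd⟩ := (Submodule.mem_span_range_iff_exists_fun F).mp (hspan _ (hv' k))
    rw [← hd]
    have hz : ∀ j, B f ⁅s, v j⁆ = 0 := by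
      intro j
      rw [← lie_skew, map_neg, h0 j, neg_zero]
    simp [hlsum, lie_smul, hz]
  -- Part 1
  have part1 : (∑ k, B u (v' k) • v k) = ⁅e, u⁆ := by
    have hmem : (∑ k, B u (v' k) • v k) - ⁅e, u⁆ ∈ Submodule.span F (Set.range v) := by
      refine Submodule.sub_mem _ ?_ (hspan _ hEU)
      exact Submodule.sum_mem _ fun k _ =>
        Submodule.smul_mem _ _ (Submodule.subset_span ⟨k, rfl⟩)
    have hz : ∀ k, B f ⁅(∑ j, B u (v' j) • v j) - ⁅e, u⁆, v' k⁆ = 0 := by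
      intro k
      have hsum : B f ⁅∑ j, B u (v' j) • v j, v' k⁆ = B u (v' k) := by
        simp [hsuml, smul_lie, hdual, Finset.sum_ite_eq']
      have heu : B f ⁅⁅e, u⁆, v' k⁆ = B u (v' k) := by
        rw [← lie_skew, map_neg, hC (v' k) (hv' k)]
        ring
      rw [sub_lie, map_sub, hsum, heu, sub_self]
    exact sub_eq_zero.mp (hE' _ hmem hz)
  -- Part 2
  have part2 : (∑ k, B u (v k) • v' k) = -⁅e, u⁆ := by
    have hmem : (∑ k, B u (v k) • v' k) + ⁅e, u⁆ ∈ Submodule.span F (Set.range v) := by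
      refine Submodule.add_mem _ ?_ (hspan _ hEU)
      exact Submodule.sum_mem _ fun k _ =>
        Submodule.smul_mem _ _ (hspan _ (hv' k))
    have hz : ∀ k, B f ⁅v k, (∑ j, B u (v j) • v' j) + ⁅e, u⁆⁆ = 0 := by
      intro k
      have hsum : B f ⁅v k, ∑ j, B u (v j) • v' j⁆ = B u (v k) := by
        simp [hlsum, lie_smul, hdual, Finset.sum_ite_eq]
      rw [lie_add, map_add, hsum, hC (v k) (hv k)]
      ring
    have h0 := hE _ hmem hz
    rw [add_eq_zero_iff_eq_neg] at h0
    exact h0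
  exact ⟨part1, part2⟩
end
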